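/- arXiv:1802.10453 — 10 statements merged into one kernel-verified Lean document; each statement's English description precedes it below -/
import Mathlib

section
/- For any matrix A over a field F of size m×n, there exists a unique m×n matrix R with entries in {0,1} having exactly rank(A) ones, with at most one 1 in each row and each column (rook placement), such that for all i ≤ m and j ≤ n, the rank of the leading i×j submatrix of R equals the rank of the leading i×j submatrix of A. -/
open Matrix
open scoped Classical

/-!
Let `r i j` be the rank of the leading `i × j` block of `A`. Deleting a row or a column lowers a
rank by at most one, and the rank lost by deleting the last row of a leading block is the
dimension of the intersection of its column space with the kernel of the truncation, so it can
only grow when columns are added. Hence the mixed difference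
`r (i+1) (j+1) - r i (j+1) - r (i+1) j + r i j` is nonnegative, its sums along a row or a column
telescope to a rank increment, which is at most one, and so it is a rook placement `R`. The rank
of a leading block of a rook placement is the number of its ones, which is the double prefix sum
of the mixed differences, i.e. `r i j`. Conversely these counts recover any rook placement as
their mixed differences, which gives uniqueness.
-/

open Module Submodule

theorem Submodule.finrank_map_add_finrank_inf_ker {K V W : Type*} [Field K] [AddCommGroup V]
    [Module K V] [FiniteDimensional K V] [AddCommGroup W] [Module K W]
    (f : V →ₗ[K] W) (U : Submodule K V) :
    finrank K (U.map f) + finrank K ↥(U ⊓ LinearMap.ker f) = finrank K U := by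
  rw [← (f.domRestrict U).finrank_range_add_finrank_ker, LinearMap.range_domRestrict,
    LinearMap.ker_domRestrict, ← map_comap_subtype, finrank_map_subtype_eq]

namespace Matrix

variable {ι ι' κ κ' F : Type*} [Field F]

section ColumnSpace

open Set

theorem span_range_col_submatrix_left (B : Matrix ι κ F) (r : ι' → ι) :
    span F (range (B.submatrix r id).col) =
      (span F (range B.col)).map (LinearMap.funLeft F F r) := by
  rw [map_span, ← range_comp]
  rfl

theorem span_range_col_submatrix_right_le (B : Matrix ι κ F) (c : κ' → κ) :
    span F (range (B.submatrix id c).col) ≤ span F (range B.col) :=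
  span_mono (range_comp_subset_range c B.col)

variable [Fintype ι] [Fintype κ] [Fintype κ']

theorem rank_submatrix_add_rank_submatrix_le (B : Matrix ι κ F) (r : ι' → ι) (c : κ' → κ) :
    (B.submatrix r id).rank + (B.submatrix id c).rank ≤ B.rank + (B.submatrix r c).rank := by
  have hB := (span F (range B.col)).finrank_map_add_finrank_inf_ker (LinearMap.funLeft F F r)
  have hBc := (span F (range (B.submatrix id c).col)).finrank_map_add_finrank_inf_ker
    (LinearMap.funLeft F F r)
  have hker := Submodule.finrank_mono (inf_le_inf_right (LinearMap.ker (LinearMap.funLeft F F r))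
    (span_range_col_submatrix_right_le B c))
  have hrc : B.submatrix r c = (B.submatrix id c).submatrix r id := rfl
  rw [hrc, rank_eq_finrank_span_cols, rank_eq_finrank_span_cols, rank_eq_finrank_span_cols,
    rank_eq_finrank_span_cols, span_range_col_submatrix_left, span_range_col_submatrix_left]
  omega

variable [Fintype ι']

theorem rank_le_rank_submatrix_left_add_card_sub (B : Matrix ι κ F) {r : ι' → ι}
    (hr : Function.Injective r) :
    B.rank ≤ (B.submatrix r id).rank + (Fintype.card ι - Fintype.card ι') := by
  have hker : finrank F (LinearMap.ker (LinearMap.funLeft F F r)) =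
      Fintype.card ι - Fintype.card ι' := by
    have := (LinearMap.funLeft F F r).finrank_range_add_finrank_ker
    rw [LinearMap.range_eq_top.2 (LinearMap.funLeft_surjective_of_injective F F r hr),
      finrank_top, finrank_fintype_fun_eq_card, finrank_fintype_fun_eq_card] at this
    omega
  have hB := (span F (range B.col)).finrank_map_add_finrank_inf_ker (LinearMap.funLeft F F r)
  have hle := Submodule.finrank_mono
    (inf_le_right : span F (range B.col) ⊓ LinearMap.ker (LinearMap.funLeft F F r) ≤ _)
  rw [rank_eq_finrank_span_cols, rank_eq_finrank_span_cols, span_range_col_submatrix_left]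
  omega

theorem rank_le_rank_submatrix_right_add_card_sub (B : Matrix ι κ F) {c : κ' → κ}
    (hc : Function.Injective c) :
    B.rank ≤ (B.submatrix id c).rank + (Fintype.card κ - Fintype.card κ') := by
  rw [← rank_transpose, ← rank_transpose (B.submatrix id c), transpose_submatrix]
  exact rank_le_rank_submatrix_left_add_card_sub Bᵀ hc

end ColumnSpace

structure IsRookPlacement (R : Matrix ι κ F) : Prop where
  zero_or_one : ∀ i j, R i j = 0 ∨ R i j = 1
  row_unique : ∀ i j j', R i j = 1 → R i j' = 1 → j = j'
  col_unique : ∀ i i' j, R i j = 1 → R i' j = 1 → i = i'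

namespace IsRookPlacement

open Set

variable {R : Matrix ι κ F} (hR : R.IsRookPlacement)
include hR

theorem submatrix {r : ι' → ι} {c : κ' → κ} (hr : Function.Injective r)
    (hc : Function.Injective c) : (R.submatrix r c).IsRookPlacement where
  zero_or_one i j := hR.zero_or_one (r i) (c j)
  row_unique _ _ _ h h' := hc (hR.row_unique _ _ _ h h')
  col_unique _ _ _ h h' := hr (hR.col_unique _ _ _ h h')

theorem col_eq_single [DecidableEq ι] {i : ι} {j : κ} (h : R i j = 1) :
    R.col j = Pi.single i 1 := by
  funext i'
  rcases eq_or_ne i' i with rfl | hne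
  · simpa using h
  · rw [Pi.single_eq_of_ne hne]
    exact (hR.zero_or_one i' j).resolve_right fun h' => hne (hR.col_unique _ _ _ h' h)

theorem col_eq_zero {j : κ} (h : ∀ i, R i j ≠ 1) : R.col j = 0 :=
  funext fun i => (hR.zero_or_one i j).resolve_right (h i)

theorem span_range_col [DecidableEq ι] :
    span F (range R.col) =
      span F (range fun i : {i // ∃ j, R i j = 1} => Pi.single i.1 (1 : F)) := by
  apply le_antisymm <;> rw [span_le]
  · rintro _ ⟨j, rfl⟩
    by_cases h : ∃ i, R i j = 1
    · obtain ⟨i, hi⟩ := h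
      exact subset_span ⟨⟨i, j, hi⟩, (hR.col_eq_single hi).symm⟩
    · rw [hR.col_eq_zero (not_exists.1 h)]
      exact zero_mem _
  · rintro _ ⟨⟨i, j, hi⟩, rfl⟩
    exact subset_span ⟨j, hR.col_eq_single hi⟩

theorem rank_eq_card [Fintype ι] [Fintype κ] :
    R.rank = (Finset.univ.filter fun p : ι × κ => R p.1 p.2 = 1).card := by
  have hli : LinearIndependent F fun i : {i // ∃ j, R i j = 1} => (Pi.single i.1 1 : ι → F) :=
    (Pi.basisFun F ι).linearIndependent.comp _ Subtype.val_injective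
  rw [rank_eq_finrank_span_cols, hR.span_range_col, finrank_span_eq_card hli,
    Fintype.card_subtype]
  refine (Finset.card_bij (fun p _ => p.1) ?_ ?_ ?_).symm
  · intro p hp
    simp only [Finset.mem_filter, Finset.mem_univ, true_and] at hp ⊢
    exact ⟨p.2, hp⟩
  · intro p hp q hq h
    simp only [Finset.mem_filter, Finset.mem_univ, true_and] at hp hq
    exact Prod.ext h (hR.row_unique _ _ _ hp (h ▸ hq))
  · intro i hi
    simp only [Finset.mem_filter, Finset.mem_univ, true_and] at hi
    obtain ⟨j, hj⟩ := hi
    exact ⟨(i, j), by simpa using hj, rfl⟩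

end IsRookPlacement

end Matrix

namespace RankProfile

open Finset

def mixedDiff (r : ℕ → ℕ → ℤ) (a b : ℕ) : ℤ :=
  r (a + 1) (b + 1) - r a (b + 1) - r (a + 1) b + r a b

def prefixSum (g : ℕ → ℕ → ℤ) (i j : ℕ) : ℤ :=
  ∑ a ∈ range i, ∑ b ∈ range j, g a b

theorem mixedDiff_prefixSum (g : ℕ → ℕ → ℤ) (a b : ℕ) :
    mixedDiff (prefixSum g) a b = g a b := by
  simp only [mixedDiff, prefixSum, sum_range_succ]
  ring

theorem sum_range_mixedDiff (r : ℕ → ℕ → ℤ) (a j : ℕ) :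
    ∑ b ∈ range j, mixedDiff r a b = (r (a + 1) j - r a j) - (r (a + 1) 0 - r a 0) := by
  rw [← sum_range_sub (fun b => r (a + 1) b - r a b)]
  refine sum_congr rfl fun b _ => ?_
  simp only [mixedDiff]
  ring

theorem prefixSum_mixedDiff {r : ℕ → ℕ → ℤ} (hrow0 : ∀ j, r 0 j = 0) (hcol0 : ∀ i, r i 0 = 0)
    (i j : ℕ) : prefixSum (mixedDiff r) i j = r i j := by
  have := sum_range_sub (fun a => r a j) i
  simp only [prefixSum, sum_range_mixedDiff, hcol0, sub_zero] at this ⊢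
  rw [this, hrow0, sub_zero]

theorem mixedDiff_swap (r : ℕ → ℕ → ℤ) (a b : ℕ) :
    mixedDiff (fun i j => r j i) a b = mixedDiff r b a := by
  simp only [mixedDiff]
  ring

theorem eq_of_sum_range_le_one {f : ℕ → ℤ} (hf0 : ∀ b, 0 ≤ f b)
    (hf1 : ∀ N, ∑ b ∈ range N, f b ≤ 1) {b b' : ℕ} (hb : f b = 1) (hb' : f b' = 1) :
    b = b' := by
  by_contra hne
  have := add_le_sum (fun k _ => hf0 k) (mem_range.2 (by omega : b < max b b' + 1))
    (mem_range.2 (by omega : b' < max b b' + 1)) hne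
  linarith [hf1 (max b b' + 1)]

theorem le_one_of_sum_range_le_one {f : ℕ → ℤ} (hf0 : ∀ b, 0 ≤ f b)
    (hf1 : ∀ N, ∑ b ∈ range N, f b ≤ 1) (b : ℕ) : f b ≤ 1 :=
  (single_le_sum (fun k _ => hf0 k) (self_mem_range_succ b)).trans (hf1 (b + 1))

structure IsLeadingRankFunction (r : ℕ → ℕ → ℤ) : Prop where
  zero_left : ∀ j, r 0 j = 0
  zero_right : ∀ i, r i 0 = 0
  succ_left_le : ∀ i j, r (i + 1) j ≤ r i j + 1
  succ_right_le : ∀ i j, r i (j + 1) ≤ r i j + 1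
  mixedDiff_nonneg : ∀ i j, 0 ≤ mixedDiff r i j

namespace IsLeadingRankFunction

variable {r : ℕ → ℕ → ℤ} (hr : IsLeadingRankFunction r)
include hr

theorem swap : IsLeadingRankFunction fun i j => r j i where
  zero_left := hr.zero_right
  zero_right := hr.zero_left
  succ_left_le i j := hr.succ_right_le j i
  succ_right_le i j := hr.succ_left_le j i
  mixedDiff_nonneg i j := (mixedDiff_swap r i j).symm ▸ hr.mixedDiff_nonneg j i

theorem sum_range_mixedDiff_le_one (a N : ℕ) : ∑ b ∈ range N, mixedDiff r a b ≤ 1 := by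
  rw [sum_range_mixedDiff, hr.zero_right, hr.zero_right]
  linarith [hr.succ_left_le a N]

theorem mixedDiff_le_one (a b : ℕ) : mixedDiff r a b ≤ 1 :=
  le_one_of_sum_range_le_one (hr.mixedDiff_nonneg a) (hr.sum_range_mixedDiff_le_one a) b

theorem mixedDiff_eq_zero_or_one (a b : ℕ) : mixedDiff r a b = 0 ∨ mixedDiff r a b = 1 := by
  have := hr.mixedDiff_nonneg a b
  have := hr.mixedDiff_le_one a b
  omega

theorem mixedDiff_row_unique {a b b' : ℕ} (hb : mixedDiff r a b = 1)
    (hb' : mixedDiff r a b' = 1) : b = b' :=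
  eq_of_sum_range_le_one (hr.mixedDiff_nonneg a) (hr.sum_range_mixedDiff_le_one a) hb hb'

theorem mixedDiff_col_unique {a a' b : ℕ} (ha : mixedDiff r a b = 1)
    (ha' : mixedDiff r a' b = 1) : a = a' :=
  hr.swap.mixedDiff_row_unique (a := b) (by rwa [mixedDiff_swap]) (by rwa [mixedDiff_swap])

end IsLeadingRankFunction

end RankProfile

namespace Matrix

open RankProfile

variable {m n : ℕ}

section Leading

variable {α : Type*} [Zero α]

/-- Makes `leadingBlock A i j` meaningful for all `i j`: beyond the `m × n` grid it is padded
with zeros. -/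
def zeroExtend (A : Matrix (Fin m) (Fin n) α) (a b : ℕ) : α :=
  if h : a < m ∧ b < n then A ⟨a, h.1⟩ ⟨b, h.2⟩ else 0

def leadingBlock (A : Matrix (Fin m) (Fin n) α) (i j : ℕ) : Matrix (Fin i) (Fin j) α :=
  of fun a b => A.zeroExtend a b

theorem zeroExtend_coe (A : Matrix (Fin m) (Fin n) α) (a : Fin m) (b : Fin n) :
    A.zeroExtend a b = A a b := by
  simp [zeroExtend]

theorem submatrix_castLE_eq_leadingBlock (A : Matrix (Fin m) (Fin n) α) {i j : ℕ} (hi : i ≤ m)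
    (hj : j ≤ n) : A.submatrix (Fin.castLE hi) (Fin.castLE hj) = A.leadingBlock i j := by
  ext a b
  exact (zeroExtend_coe A (Fin.castLE hi a) (Fin.castLE hj b)).symm

theorem leadingBlock_self (A : Matrix (Fin m) (Fin n) α) : A.leadingBlock m n = A := by
  ext a b
  exact zeroExtend_coe A a b

end Leading

variable {F : Type*} [Field F]

theorem isLeadingRankFunction_rank_leadingBlock (A : Matrix (Fin m) (Fin n) F) :
    IsLeadingRankFunction fun i j => ((A.leadingBlock i j).rank : ℤ) where
  zero_left j := by simpa using rank_le_card_height (A.leadingBlock 0 j)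
  zero_right i := by simpa using rank_le_card_width (A.leadingBlock i 0)
  succ_left_le i j := by
    have := rank_le_rank_submatrix_left_add_card_sub (A.leadingBlock (i + 1) j)
      (Fin.castSucc_injective i)
    simp only [Fintype.card_fin, Nat.add_sub_cancel_left] at this
    exact_mod_cast this
  succ_right_le i j := by
    have := rank_le_rank_submatrix_right_add_card_sub (A.leadingBlock i (j + 1))
      (Fin.castSucc_injective j)
    simp only [Fintype.card_fin, Nat.add_sub_cancel_left] at this
    exact_mod_cast this
  mixedDiff_nonneg i j := by
    have := rank_submatrix_add_rank_submatrix_le (A.leadingBlock (i + 1) (j + 1))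
      Fin.castSucc Fin.castSucc
    change (A.leadingBlock i (j + 1)).rank + (A.leadingBlock (i + 1) j).rank ≤
      (A.leadingBlock (i + 1) (j + 1)).rank + (A.leadingBlock i j).rank at this
    simp only [mixedDiff]
    omega

noncomputable def onesIndicator (R : Matrix (Fin m) (Fin n) F) (a b : ℕ) : ℤ :=
  if R.zeroExtend a b = 1 then 1 else 0

theorem IsRookPlacement.rank_leadingBlock {R : Matrix (Fin m) (Fin n) F} (hR : R.IsRookPlacement)
    {i j : ℕ} (hi : i ≤ m) (hj : j ≤ n) :
    ((R.leadingBlock i j).rank : ℤ) = prefixSum R.onesIndicator i j := by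
  rw [← submatrix_castLE_eq_leadingBlock R hi hj,
    (hR.submatrix (Fin.castLE_injective hi) (Fin.castLE_injective hj)).rank_eq_card,
    submatrix_castLE_eq_leadingBlock, Finset.natCast_card_filter, Fintype.sum_prod_type, prefixSum,
    ← Fin.sum_univ_eq_sum_range]
  refine Finset.sum_congr rfl fun a _ => ?_
  rw [← Fin.sum_univ_eq_sum_range]
  rfl

theorem IsRookPlacement.eq_of_rank_leadingBlock_eq {R R' : Matrix (Fin m) (Fin n) F}
    (hR : R.IsRookPlacement) (hR' : R'.IsRookPlacement)
    (h : ∀ i j, i ≤ m → j ≤ n → (R.leadingBlock i j).rank = (R'.leadingBlock i j).rank) :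
    R = R' := by
  have hsum : ∀ i j, i ≤ m → j ≤ n →
      prefixSum R.onesIndicator i j = prefixSum R'.onesIndicator i j := fun i j hi hj => by
    rw [← hR.rank_leadingBlock hi hj, ← hR'.rank_leadingBlock hi hj, h i j hi hj]
  ext a b
  have hab : R.onesIndicator a b = R'.onesIndicator a b := by
    rw [← mixedDiff_prefixSum R.onesIndicator, ← mixedDiff_prefixSum R'.onesIndicator, mixedDiff,
      mixedDiff, hsum _ _ a.2 b.2, hsum _ _ a.2 b.2.le, hsum _ _ a.2.le b.2,
      hsum _ _ a.2.le b.2.le]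
  simp only [onesIndicator, zeroExtend_coe] at hab
  rcases hR.zero_or_one a b with h | h <;> rcases hR'.zero_or_one a b with h' | h' <;>
    simp_all

theorem exists_isRookPlacement_rank_leadingBlock_eq {r : ℕ → ℕ → ℤ}
    (hr : IsLeadingRankFunction r) (m n : ℕ) :
    ∃ R : Matrix (Fin m) (Fin n) F, R.IsRookPlacement ∧
      ∀ i j, i ≤ m → j ≤ n → ((R.leadingBlock i j).rank : ℤ) = r i j := by
  set R : Matrix (Fin m) (Fin n) F := of fun a b => if mixedDiff r a b = 1 then 1 else 0
  have hR1 : ∀ a b, R a b = 1 ↔ mixedDiff r a b = 1 := fun a b => by simp [R]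
  have hR : R.IsRookPlacement :=
    { zero_or_one a b := by by_cases h : mixedDiff r a b = 1 <;> simp [R, h]
      row_unique _ _ _ h h' := Fin.ext (hr.mixedDiff_row_unique ((hR1 _ _).1 h) ((hR1 _ _).1 h'))
      col_unique _ _ _ h h' := Fin.ext (hr.mixedDiff_col_unique ((hR1 _ _).1 h) ((hR1 _ _).1 h')) }
  refine ⟨R, hR, fun i j hi hj => ?_⟩
  rw [hR.rank_leadingBlock hi hj, ← prefixSum_mixedDiff hr.zero_left hr.zero_right i j]
  refine Finset.sum_congr rfl fun a ha => Finset.sum_congr rfl fun b hb => ?_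
  have hab : a < m ∧ b < n :=
    ⟨(Finset.mem_range.1 ha).trans_le hi, (Finset.mem_range.1 hb).trans_le hj⟩
  have hR1' := hR1 ⟨a, hab.1⟩ ⟨b, hab.2⟩
  rw [onesIndicator, zeroExtend, dif_pos hab]
  rcases hr.mixedDiff_eq_zero_or_one a b with h | h <;> simp_all

end Matrix

/-- Existence and uniqueness of the rank profile matrix. -/
theorem rank_profile_matrix_exists_unique
    (F : Type*) [Field F] (m n : ℕ) (A : Matrix (Fin m) (Fin n) F) :
    ∃! R : Matrix (Fin m) (Fin n) F,
      (∀ i j, R i j = 0 ∨ R i j = 1) ∧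
      (Finset.univ.filter (fun p : Fin m × Fin n => R p.1 p.2 = 1)).card = A.rank ∧
      (∀ i j j', R i j = 1 → R i j' = 1 → j = j') ∧
      (∀ i i' j, R i j = 1 → R i' j = 1 → i = i') ∧
      (∀ (i j : ℕ) (hi : i ≤ m) (hj : j ≤ n),
        (R.submatrix (Fin.castLE hi) (Fin.castLE hj)).rank =
        (A.submatrix (Fin.castLE hi) (Fin.castLE hj)).rank) := by
  obtain ⟨R, hR, hrank⟩ := exists_isRookPlacement_rank_leadingBlock_eq (F := F)
    (isLeadingRankFunction_rank_leadingBlock A) m n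
  have hlead : ∀ i j, i ≤ m → j ≤ n → (R.leadingBlock i j).rank = (A.leadingBlock i j).rank :=
    fun i j hi hj => by exact_mod_cast hrank i j hi hj
  refine ⟨R, ⟨hR.zero_or_one, ?_, hR.row_unique, hR.col_unique, fun i j hi hj => ?_⟩, ?_⟩
  · rw [← hR.rank_eq_card, ← leadingBlock_self R, ← leadingBlock_self A, hlead m n le_rfl le_rfl]
  · rw [submatrix_castLE_eq_leadingBlock, submatrix_castLE_eq_leadingBlock, hlead i j hi hj]
  · rintro R' ⟨h01, -, hrow, hcol, hrank'⟩
    refine IsRookPlacement.eq_of_rank_leadingBlock_eq ⟨h01, hrow, hcol⟩ hR fun i j hi hj => ?_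
    rw [hlead i j hi hj, ← submatrix_castLE_eq_leadingBlock _ hi hj,
      ← submatrix_castLE_eq_leadingBlock _ hi hj, hrank' i j hi hj]
end

section
/- If A is a symmetric n×n matrix over a field, then its rank profile matrix is symmetric. -/
/-!
In a rook placement every leading submatrix has rank equal to the number of ones it contains,
so by inclusion–exclusion the entry at `(a, b)` is determined by the leading ranks at
`(a, b)`, `(a + 1, b)`, `(a, b + 1)` and `(a + 1, b + 1)`: a rook placement is determined by
its leading ranks. If `A` is symmetric, the leading `i × j` rank of `Rᵀ` is the leading
`j × i` rank of `R`, i.e. of `A`, which by symmetry is the leading `i × j` rank of `A`, i.e.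
of `R`. So `R` and `Rᵀ` are rook placements with the same leading ranks, hence equal.
-/

open Matrix
open scoped Classical

/-- `R` is the rank profile matrix of `A`. -/
def IsRankProfileMatrix {F : Type*} [Field F] {m n : ℕ}
    (A R : Matrix (Fin m) (Fin n) F) : Prop :=
  (∀ i j, R i j = 0 ∨ R i j = 1) ∧
  (Finset.univ.filter (fun p : Fin m × Fin n => R p.1 p.2 = 1)).card = A.rank ∧
  (∀ i j j', R i j = 1 → R i j' = 1 → j = j') ∧
  (∀ i i' j, R i j = 1 → R i' j = 1 → i = i') ∧
  (∀ (i j : ℕ) (hi : i ≤ m) (hj : j ≤ n),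
    (R.submatrix (Fin.castLE hi) (Fin.castLE hj)).rank =
    (A.submatrix (Fin.castLE hi) (Fin.castLE hj)).rank)

namespace Matrix

structure IsRookPlacement_s1 {α β R : Type*} [Zero R] [One R] (M : Matrix α β R) : Prop where
  zero_or_one : ∀ i j, M i j = 0 ∨ M i j = 1
  row_unique : ∀ i j j', M i j = 1 → M i j' = 1 → j = j'
  col_unique : ∀ i i' j, M i j = 1 → M i' j = 1 → i = i'

noncomputable def onesCount {α β R : Type*} [One R] (M : Matrix α β R) (s : Finset α)
    (t : Finset β) : ℕ :=
  ∑ i ∈ s, ∑ j ∈ t, if M i j = 1 then 1 else 0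

section

variable {α β R : Type*} {M : Matrix α β R}

theorem IsRookPlacement_s1.transpose [Zero R] [One R] (hM : M.IsRookPlacement_s1) :
    Mᵀ.IsRookPlacement_s1 :=
  ⟨fun i j => hM.zero_or_one j i, fun i _ _ h h' => hM.col_unique _ _ i h h',
    fun _ _ j h h' => hM.row_unique j _ _ h h'⟩

theorem IsRookPlacement_s1.submatrix [Zero R] [One R] (hM : M.IsRookPlacement_s1) {α' β' : Type*}
    {e₁ : α' → α} {e₂ : β' → β} (he₁ : e₁.Injective) (he₂ : e₂.Injective) :
    (M.submatrix e₁ e₂).IsRookPlacement_s1 :=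
  ⟨fun _ _ => hM.zero_or_one _ _, fun _ _ _ h h' => he₂ (hM.row_unique _ _ _ h h'),
    fun _ _ _ h h' => he₁ (hM.col_unique _ _ _ h h')⟩

theorem IsRookPlacement_s1.col_eq_single [DecidableEq α] [Zero R] [One R]
    (hM : M.IsRookPlacement_s1) {i : α} {j : β} (h : M i j = 1) : M.col j = Pi.single i 1 := by
  funext i'
  rcases eq_or_ne i' i with rfl | hi'
  · simp [h]
  · rcases hM.zero_or_one i' j with h' | h'
    · simp [h', hi']
    · exact absurd (hM.col_unique _ _ _ h' h) hi'

theorem IsRookPlacement_s1.col_eq_zero [Zero R] [One R] (hM : M.IsRookPlacement_s1) {j : β}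
    (h : ∀ i, M i j ≠ 1) : M.col j = 0 :=
  funext fun i => (hM.zero_or_one i j).resolve_right (h i)

theorem onesCount_submatrix [One R] {α' β' : Type*} [Fintype α'] [Fintype β']
    (e₁ : α' ↪ α) (e₂ : β' ↪ β) :
    (M.submatrix e₁ e₂).onesCount .univ .univ =
      M.onesCount (Finset.univ.map e₁) (Finset.univ.map e₂) := by
  simp only [onesCount, Finset.sum_map]
  rfl

theorem onesCount_insert_insert [DecidableEq α] [DecidableEq β] [One R] {s : Finset α}
    {t : Finset β} {a : α} {b : β} (ha : a ∉ s) (hb : b ∉ t) :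
    M.onesCount (insert a s) (insert b t) + M.onesCount s t =
      M.onesCount s (insert b t) + M.onesCount (insert a s) t + if M a b = 1 then 1 else 0 := by
  simp only [onesCount, Finset.sum_insert ha, Finset.sum_insert hb, Finset.sum_add_distrib]
  ring

end

variable {F : Type*} [Field F]

/-- The ones of a rook placement sit in distinct rows, so its nonzero columns are distinct
standard basis vectors. -/
theorem IsRookPlacement_s1.rank_eq_onesCount {α β : Type*} [Fintype α] [Fintype β]
    {M : Matrix α β F} (hM : M.IsRookPlacement_s1) : M.rank = M.onesCount .univ .univ := by
  set S := Finset.univ.filter fun p : α × β => M p.1 p.2 = 1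
  have hS : M.onesCount .univ .univ = S.card := by
    rw [Finset.card_filter, ← Finset.univ_product_univ, Finset.sum_product, onesCount]
  have hspan : Submodule.span F (Set.range M.col) =
      Submodule.span F (Set.range fun p : S => M.col p.1.2) := by
    refine le_antisymm (Submodule.span_le.2 ?_) (Submodule.span_mono ?_)
    · rintro _ ⟨j, rfl⟩
      by_cases h : ∃ i, M i j = 1
      · obtain ⟨i, hi⟩ := h
        exact Submodule.subset_span ⟨⟨(i, j), by simpa [S] using hi⟩, rfl⟩
      · rw [hM.col_eq_zero (not_exists.1 h)]
        exact zero_mem _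
    · rintro _ ⟨p, rfl⟩
      exact ⟨p.1.2, rfl⟩
  have hcol : (fun p : S => M.col p.1.2) = Pi.basisFun F α ∘ fun p => p.1.1 := by
    funext p
    simpa using hM.col_eq_single (Finset.mem_filter.1 p.2).2
  have hinj : Function.Injective fun p : S => p.1.1 := by
    intro p q h
    have hp := (Finset.mem_filter.1 p.2).2
    have hq := (Finset.mem_filter.1 q.2).2
    simp only at h
    rw [h] at hp
    exact Subtype.ext (Prod.ext h (hM.row_unique _ _ _ hp hq))
  rw [rank_eq_finrank_span_cols, hspan, finrank_span_eq_card, Fintype.card_coe, hS]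
  exact hcol ▸ (Pi.basisFun F α).linearIndependent.comp _ hinj

variable {m n : ℕ}

theorem _root_.Fin.map_castLEEmb_univ {i : ℕ} (h : i ≤ m) :
    Finset.univ.map (Fin.castLEEmb h) = ({a : Fin m | (a : ℕ) < i} : Finset (Fin m)) := by
  ext a
  simp only [Finset.mem_map, Finset.mem_univ, true_and, Finset.mem_filter]
  exact ⟨fun ⟨b, hb⟩ => hb ▸ b.isLt, fun ha => ⟨⟨a, ha⟩, rfl⟩⟩

theorem _root_.Fin.filter_val_lt_succ (a : Fin m) :
    ({b : Fin m | (b : ℕ) < a + 1} : Finset (Fin m)) =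
      insert a ({b : Fin m | (b : ℕ) < a} : Finset (Fin m)) := by
  ext b
  simp only [Finset.mem_filter, Finset.mem_insert, Finset.mem_univ, true_and, Fin.ext_iff]
  omega

theorem onesCount_filter_val_lt_succ {R : Type*} [One R] (M : Matrix (Fin m) (Fin n) R)
    (a : Fin m) (b : Fin n) :
    M.onesCount {x | (x : ℕ) < a + 1} {y | (y : ℕ) < b + 1} +
        M.onesCount {x | (x : ℕ) < a} {y | (y : ℕ) < b} =
      M.onesCount {x | (x : ℕ) < a} {y | (y : ℕ) < b + 1} +
        M.onesCount {x | (x : ℕ) < a + 1} {y | (y : ℕ) < b} + if M a b = 1 then 1 else 0 := by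
  simp only [Fin.filter_val_lt_succ]
  exact M.onesCount_insert_insert (by simp) (by simp)

theorem IsRookPlacement_s1.rank_submatrix_castLE {M : Matrix (Fin m) (Fin n) F}
    (hM : M.IsRookPlacement_s1) {i j : ℕ} (hi : i ≤ m) (hj : j ≤ n) :
    (M.submatrix (Fin.castLE hi) (Fin.castLE hj)).rank =
      M.onesCount {a | (a : ℕ) < i} {b | (b : ℕ) < j} := by
  rw [(hM.submatrix (Fin.castLE_injective hi) (Fin.castLE_injective hj)).rank_eq_onesCount,
    ← Fin.map_castLEEmb_univ hi, ← Fin.map_castLEEmb_univ hj]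
  exact onesCount_submatrix (Fin.castLEEmb hi) (Fin.castLEEmb hj)

theorem IsRookPlacement_s1.ext_of_rank_submatrix_castLE {M N : Matrix (Fin m) (Fin n) F}
    (hM : M.IsRookPlacement_s1) (hN : N.IsRookPlacement_s1)
    (h : ∀ (i j : ℕ) (hi : i ≤ m) (hj : j ≤ n),
      (M.submatrix (Fin.castLE hi) (Fin.castLE hj)).rank =
        (N.submatrix (Fin.castLE hi) (Fin.castLE hj)).rank) :
    M = N := by
  have hcount : ∀ i j, i ≤ m → j ≤ n →
      M.onesCount {a | (a : ℕ) < i} {b | (b : ℕ) < j} =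
        N.onesCount {a | (a : ℕ) < i} {b | (b : ℕ) < j} := fun i j hi hj => by
    rw [← hM.rank_submatrix_castLE hi hj, ← hN.rank_submatrix_castLE hi hj, h]
  ext a b
  have hM' := M.onesCount_filter_val_lt_succ a b
  have hN' := N.onesCount_filter_val_lt_succ a b
  rw [hcount _ _ a.isLt b.isLt, hcount _ _ a.isLt.le b.isLt.le, hcount _ _ a.isLt.le b.isLt,
    hcount _ _ a.isLt b.isLt.le] at hM'
  rcases hM.zero_or_one a b with hMab | hMab <;> rcases hN.zero_or_one a b with hNab | hNab <;>
    simp_all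

end Matrix

/-- A symmetric matrix has a symmetric rank profile matrix. -/
theorem symmetric_rank_profile_matrix {F : Type*} [Field F] {n : ℕ}
    (A R : Matrix (Fin n) (Fin n) F) (hA : A.IsSymm)
    (hR : IsRankProfileMatrix A R) : R.IsSymm := by
  obtain ⟨h01, -, hrow, hcol, hlead⟩ := hR
  have hR' : R.IsRookPlacement_s1 := ⟨h01, hrow, hcol⟩
  refine hR'.transpose.ext_of_rank_submatrix_castLE hR' fun i j hi hj => ?_
  calc (Rᵀ.submatrix (Fin.castLE hi) (Fin.castLE hj)).rank
      = (R.submatrix (Fin.castLE hj) (Fin.castLE hi)).rank := by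
        rw [← transpose_submatrix, rank_transpose]
    _ = (A.submatrix (Fin.castLE hj) (Fin.castLE hi)).rank := hlead j i hj hi
    _ = (Aᵀ.submatrix (Fin.castLE hi) (Fin.castLE hj)).rank := by
        rw [← transpose_submatrix, rank_transpose]
    _ = (R.submatrix (Fin.castLE hi) (Fin.castLE hj)).rank := by rw [hA.eq, hlead]
end

section
/- Over the field F₂ with two elements, there do not exist a 2×2 permutation matrix P, a unit lower triangular matrix L, a diagonal matrix D̄, and a {0,1} support matrix Ψ ∈ {I₂, J} (where J is the antidiagonal identity) with PΨP^T = J, such that A = P L (Ψ D̄) L^T P^T, where A = [[0,1],[1,1]]. -/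
/-!
In characteristic 2 a symmetric matrix with zero diagonal is alternating (`vᵀ M v = 0` for all `v`),
and congruences `M ↦ B M Bᵀ` preserve alternating matrices. Since `P I Pᵀ = I`, the support matrix
must be `Ψ = J`. Then `Ψ D̄` is congruent to the symmetric `A` via the invertible `P L`, so it is
symmetric itself, and its diagonal vanishes. Hence `A` would be alternating, contradicting `A₂₂ = 1`.
-/

open Matrix

namespace Matrix

theorem permMatrix_mul_transpose_self {n R : Type*} [DecidableEq n] [Fintype n]
    [NonAssocSemiring R] (σ : Equiv.Perm n) : σ.permMatrix R * (σ.permMatrix R)ᵀ = 1 := by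
  rw [transpose_permMatrix, ← permMatrix_mul, inv_mul_cancel, permMatrix_one]

variable {m n R : Type*} [Fintype n] [CommSemiring R]

def IsAlt (M : Matrix n n R) : Prop :=
  ∀ v : n → R, v ⬝ᵥ M *ᵥ v = 0

theorem IsAlt.mul_mul_transpose [Fintype m] {M : Matrix n n R} (hM : M.IsAlt)
    (B : Matrix m n R) : (B * M * Bᵀ).IsAlt := fun v => by
  rw [← mulVec_mulVec, ← mulVec_mulVec, dotProduct_mulVec, ← mulVec_transpose]
  exact hM (Bᵀ *ᵥ v)

theorem IsAlt.apply_self_eq_zero [DecidableEq n] {M : Matrix n n R} (hM : M.IsAlt) (i : n) :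
    M i i = 0 := by
  simpa using hM (Pi.single i 1)

theorem IsSymm.isAlt_of_diag_eq_zero [CharP R 2] {M : Matrix n n R} (hM : M.IsSymm)
    (hdiag : M.diag = 0) : M.IsAlt := fun v => by
  have hsum : v ⬝ᵥ M *ᵥ v = ∑ p : n × n, v p.1 * (M p.1 p.2 * v p.2) := by
    simp only [dotProduct, mulVec, Finset.mul_sum, Fintype.sum_prod_type]
  rw [hsum]
  refine Finset.sum_ninvolution Prod.swap (fun p => ?_) (fun p hp => ?_) (by simp) Prod.swap_swap
  · rw [Prod.fst_swap, Prod.snd_swap, hM.apply p.1 p.2]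
    convert CharTwo.add_self_eq_zero (v p.1 * (M p.1 p.2 * v p.2)) using 2
    ring
  · intro hswap
    have hp_eq : p.1 = p.2 := congrArg Prod.snd hswap
    apply hp
    rw [hp_eq, ← diag_apply M, hdiag, Pi.zero_apply, zero_mul, mul_zero]

theorem IsSymm.of_mul_mul_transpose [DecidableEq n] {B M : Matrix n n R} (hB : IsUnit B)
    (h : (B * M * Bᵀ).IsSymm) : M.IsSymm := by
  have : B * Mᵀ * Bᵀ = B * M * Bᵀ := by
    simpa [IsSymm, transpose_mul, mul_assoc] using h
  exact hB.mul_left_cancel (((isUnit_transpose B).2 hB).mul_right_cancel this)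

end Matrix

/-- In characteristic 2, there is no symmetric indefinite elimination revealing
the rank profile matrix of `A = !![0,1;1,1]`. -/
theorem no_rpm_revealing_ldlt_char_two :
    ¬ ∃ (σ : Equiv.Perm (Fin 2)) (x y z : ZMod 2)
        (Ψ : Matrix (Fin 2) (Fin 2) (ZMod 2)),
      (Ψ = 1 ∨ Ψ = !![0,1;1,0]) ∧
      (σ.toPEquiv.toMatrix : Matrix (Fin 2) (Fin 2) (ZMod 2)) * Ψ *
        (σ.toPEquiv.toMatrix : Matrix (Fin 2) (Fin 2) (ZMod 2))ᵀ = !![0,1;1,0] ∧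
      (!![0,1;1,1] : Matrix (Fin 2) (Fin 2) (ZMod 2)) =
        (σ.toPEquiv.toMatrix : Matrix (Fin 2) (Fin 2) (ZMod 2)) *
          !![1,0;x,1] * (Ψ * !![y,0;0,z]) * (!![1,0;x,1])ᵀ *
          (σ.toPEquiv.toMatrix : Matrix (Fin 2) (Fin 2) (ZMod 2))ᵀ := by
  rintro ⟨σ, x, y, z, Ψ, hΨ, hrpm, hA⟩
  have hΨJ : Ψ = !![0,1;1,0] := hΨ.resolve_left fun h => by
    rw [h, Matrix.mul_one, permMatrix_mul_transpose_self] at hrpm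
    exact absurd (congrFun (congrFun hrpm 0) 0) (by decide)
  subst hΨJ
  have hP : IsUnit (σ.permMatrix (ZMod 2)) :=
    (isUnit_iff_isUnit_det _).2 (isUnit_det_of_right_inverse (permMatrix_mul_transpose_self σ))
  have hL : IsUnit !![(1 : ZMod 2),0;x,1] := by simp [isUnit_iff_isUnit_det, det_fin_two_of]
  set B := σ.permMatrix (ZMod 2) * !![1,0;x,1]
  have hconj : !![0,1;1,1] = B * (!![0,1;1,0] * !![y,0;0,z]) * Bᵀ := by
    rw [hA, transpose_mul]
    simp only [B, Matrix.mul_assoc]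
  have hsymm : (!![0,1;1,0] * !![y,0;0,z] : Matrix (Fin 2) (Fin 2) (ZMod 2)).IsSymm :=
    IsSymm.of_mul_mul_transpose (hP.mul hL) (hconj ▸ by decide)
  have halt := (hsymm.isAlt_of_diag_eq_zero (by ext i; fin_cases i <;> simp)).mul_mul_transpose B
  exact absurd ((hconj ▸ halt).apply_self_eq_zero 1) (by decide)
end

section
/- Let F be a field of characteristic different from 2, let U be an invertible (full-rank) upper triangular n×n matrix over F, and let C be a symmetric n×n matrix over F. Then there exists an upper triangular matrix X over F such that X^T U + U^T X = C. -/
open Matrix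

/-!
Conjugating by `U` reduces the equation to the case `U = 1`: if `Wᵀ + W = U⁻ᵀ C U⁻¹` with `W`
upper triangular, then `X = W U` is upper triangular and `Xᵀ U + Uᵀ X = Uᵀ (Wᵀ + W) U = C`.
A symmetric `S` is `Wᵀ + W` for the upper triangular `W` that keeps the strict upper part of `S`
and halves its diagonal, which needs `2 ≠ 0`.
-/

namespace Matrix

variable {ι K : Type*} [LinearOrder ι]

theorem IsSymm.exists_isUpperTriangular_transpose_add [DivisionRing K] [NeZero (2 : K)]
    {S : Matrix ι ι K} (hS : S.IsSymm) :
    ∃ W : Matrix ι ι K, W.IsUpperTriangular ∧ Wᵀ + W = S := by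
  refine ⟨of fun i j => if i < j then S i j else if i = j then S i i / 2 else 0, ?_, ?_⟩
  · intro i j (hji : j < i)
    simp [hji.not_gt, hji.ne']
  · ext i j
    rcases lt_trichotomy i j with hij | rfl | hji
    · simp [hij, hij.not_gt, hij.ne']
    · simp
    · simp [hji, hji.not_gt, hji.ne', hS.apply]

theorem transpose_mul_add_transpose_mul_mul [Fintype ι] [CommRing K] (W U : Matrix ι ι K) :
    (W * U)ᵀ * U + Uᵀ * (W * U) = Uᵀ * (Wᵀ + W) * U := by
  rw [transpose_mul]
  noncomm_ring

theorem IsSymm.exists_isUpperTriangular_transpose_mul_add [Fintype ι] [Field K] [NeZero (2 : K)]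
    {U C : Matrix ι ι K} (hU : U.IsUpperTriangular) (hUdet : IsUnit U.det) (hC : C.IsSymm) :
    ∃ X : Matrix ι ι K, X.IsUpperTriangular ∧ Xᵀ * U + Uᵀ * X = C := by
  have hS : (U⁻¹ᵀ * C * U⁻¹).IsSymm := by
    rw [IsSymm, transpose_mul, transpose_mul, transpose_transpose, hC.eq, mul_assoc]
  obtain ⟨W, hW, hWS⟩ := hS.exists_isUpperTriangular_transpose_add
  refine ⟨W * U, hW.mul hU, ?_⟩
  have hUinv : U⁻¹ * U = 1 := nonsing_inv_mul U hUdet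
  have hUTinv : Uᵀ * U⁻¹ᵀ = 1 := by rw [← transpose_mul, hUinv, transpose_one]
  calc (W * U)ᵀ * U + Uᵀ * (W * U) = (Uᵀ * U⁻¹ᵀ) * C * (U⁻¹ * U) := by
        rw [transpose_mul_add_transpose_mul_mul, hWS]; noncomm_ring
    _ = C := by rw [hUTinv, hUinv, one_mul, mul_one]

end Matrix

/-- TRSSYR2K existence: in characteristic ≠ 2, for invertible upper triangular `U`
and symmetric `C`, there exists upper triangular `X` with `Xᵀ U + Uᵀ X = C`. -/
theorem trssyr2k_exists (F : Type*) [Field F] (hchar : ringChar F ≠ 2) (n : ℕ)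
    (U C : Matrix (Fin n) (Fin n) F)
    (hUlow : ∀ i j : Fin n, j < i → U i j = 0) (hUdiag : ∀ i, U i i ≠ 0)
    (hC : C.IsSymm) :
    ∃ X : Matrix (Fin n) (Fin n) F,
      (∀ i j : Fin n, j < i → X i j = 0) ∧ Xᵀ * U + Uᵀ * X = C := by
  have : NeZero (2 : F) := ⟨Ring.two_ne_zero hchar⟩
  have hU : U.IsUpperTriangular := hUlow
  have hUdet : IsUnit U.det := by
    rw [det_of_isUpperTriangular hU]
    exact (Finset.prod_ne_zero_iff.2 fun i _ => hUdiag i).isUnit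
  exact hC.exists_isUpperTriangular_transpose_mul_add hU hUdet
end

section
/- Let F be a field of characteristic different from 2 and U an invertible upper triangular n×n matrix over F. If X and Y are both upper triangular n×n matrices satisfying X^T U + U^T X = Y^T U + U^T Y, then X = Y. -/
/-!
Put `Z = X - Y`, which is upper triangular with `Zᵀ U + Uᵀ Z = 0`. Conjugating by `U⁻¹` turns
this into `M + Mᵀ = 0` for `M = Z U⁻¹`, which is again upper triangular. An upper triangular
matrix whose transpose is its negative is diagonal with `2 M i i = 0`, so `M = 0` once `2 ≠ 0`,
and then `Z = M U = 0`.
-/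

open Matrix

namespace Matrix

variable {m R : Type*} [LinearOrder m]

theorem IsUpperTriangular.eq_zero_of_add_transpose_eq_zero [Ring R] [NoZeroDivisors R]
    [NeZero (2 : R)] {M : Matrix m m R} (hM : M.IsUpperTriangular) (h : M + Mᵀ = 0) :
    M = 0 := by
  ext i j
  have hij : M i j + M j i = 0 := congr_fun₂ h i j
  rcases lt_trichotomy j i with hji | rfl | hij'
  · exact hM hji
  · rw [← two_mul] at hij
    exact (mul_eq_zero.mp hij).resolve_left two_ne_zero
  · rwa [hM hij', add_zero] at hij

variable [Fintype m] [DecidableEq m]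

theorem IsUpperTriangular.eq_zero_of_transpose_mul_add_transpose_mul_eq_zero [CommRing R]
    [NoZeroDivisors R] [NeZero (2 : R)] {Z U : Matrix m m R} (hZ : Z.IsUpperTriangular)
    (hU : U.IsUpperTriangular) (hUdet : IsUnit U.det) (h : Zᵀ * U + Uᵀ * Z = 0) : Z = 0 := by
  have : Invertible U := U.invertibleOfIsUnitDet hUdet
  set M := Z * U⁻¹ with hMdef
  have hM : M.IsUpperTriangular := hZ.mul (blockTriangular_inv_of_blockTriangular hU)
  have hskew : M + Mᵀ = 0 :=
    calc M + Mᵀ = U⁻¹ᵀ * (Zᵀ * U + Uᵀ * Z) * U⁻¹ := by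
          rw [Matrix.mul_add, Matrix.add_mul, ← Matrix.mul_assoc, Matrix.mul_assoc _ U,
            mul_inv_of_invertible, Matrix.mul_one, ← transpose_mul, ← Matrix.mul_assoc,
            ← transpose_mul, mul_inv_of_invertible, transpose_one, Matrix.one_mul, add_comm]
      _ = 0 := by rw [h, Matrix.mul_zero, Matrix.zero_mul]
  calc Z = M * U := by rw [hMdef, Matrix.mul_assoc, inv_mul_of_invertible, Matrix.mul_one]
    _ = 0 := by rw [hM.eq_zero_of_add_transpose_eq_zero hskew, Matrix.zero_mul]

theorem IsUpperTriangular.isUnit_det [CommRing R] {U : Matrix m m R}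
    (hU : U.IsUpperTriangular) (hdiag : ∀ i, IsUnit (U i i)) : IsUnit U.det := by
  rw [det_of_isUpperTriangular hU]
  exact IsUnit.prod_univ_iff.mpr hdiag

end Matrix

/-- TRSSYR2K uniqueness in characteristic ≠ 2. -/
theorem trssyr2k_unique (F : Type*) [Field F] (hchar : ringChar F ≠ 2) (n : ℕ)
    (U X Y : Matrix (Fin n) (Fin n) F)
    (hUlow : ∀ i j : Fin n, j < i → U i j = 0) (hUdiag : ∀ i, U i i ≠ 0)
    (hX : ∀ i j : Fin n, j < i → X i j = 0)
    (hY : ∀ i j : Fin n, j < i → Y i j = 0)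
    (h : Xᵀ * U + Uᵀ * X = Yᵀ * U + Uᵀ * Y) :
    X = Y := by
  have : NeZero (2 : F) := ⟨Ring.two_ne_zero hchar⟩
  have hU : U.IsUpperTriangular := hUlow
  have hUdet : IsUnit U.det := hU.isUnit_det fun i => (hUdiag i).isUnit
  have hdiff : (X - Y)ᵀ * U + Uᵀ * (X - Y) = 0 := by
    rw [transpose_sub, Matrix.sub_mul, Matrix.mul_sub, sub_add_sub_comm, h, sub_self]
  have hZ : (X - Y).IsUpperTriangular := BlockTriangular.sub hX hY
  exact sub_eq_zero.mp (hZ.eq_zero_of_transpose_mul_add_transpose_mul_eq_zero hU hUdet hdiff)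
end

section
/- Let B be an invertible m×m matrix over a field of characteristic ≠ 2 with factorization B = L D U (L unit lower triangular, D diagonal invertible, U unit upper triangular), and let C be a symmetric m×m matrix. Then there exists a matrix G such that the symmetric matrix N = [[0, B],[B^T, C]] factors as N = [[L, 0],[G, U^T]] · [[0, D],[D, 0]] · [[L^T, G^T],[0, U]]. -/
/-!
Multiplying out the blocks, the factorization holds as soon as the lower right block
`G D U + (G D U)ᵀ` equals `C` (the other blocks are `B = L D U` and `Bᵀ`, as `D` is symmetric).
Since `D U` is a right factor of the invertible `B`, it is invertible, so one may take
`G = ½ C (D U)⁻¹`, which needs `2` to be invertible.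
-/

open Matrix

namespace Matrix

variable {n R : Type*} [CommRing R]

theorem fromBlocks_mul_antidiag_mul_fromBlocks [Fintype n] {L D U G : Matrix n n R}
    (hD : D.IsSymm) :
    fromBlocks L 0 G Uᵀ * fromBlocks 0 D D 0 * fromBlocks Lᵀ Gᵀ 0 U =
      fromBlocks 0 (L * D * U) (L * D * U)ᵀ ((G * D * U)ᵀ + G * D * U) := by
  simp only [fromBlocks_multiply, transpose_mul, hD.eq, Matrix.mul_zero, Matrix.zero_mul,
    add_zero, zero_add, Matrix.mul_assoc]

theorem IsSymm.exists_transpose_add_eq [Invertible (2 : R)] {C : Matrix n n R} (hC : C.IsSymm) :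
    ∃ X : Matrix n n R, Xᵀ + X = C :=
  ⟨⅟(2 : R) • C, by rw [transpose_smul, hC.eq, ← add_smul, invOf_two_add_invOf_two, one_smul]⟩

theorem isUnit_det_of_mul_right [Fintype n] [DecidableEq n] {A M : Matrix n n R}
    (h : IsUnit (A * M).det) : IsUnit M.det :=
  isUnit_of_mul_isUnit_right (det_mul A M ▸ h)

end Matrix

theorem off_diagonal_pivoting_general (F : Type*) [Field F] (hchar : ringChar F ≠ 2)
    (m : ℕ) (B L D U C : Matrix (Fin m) (Fin m) F)
    (hB : Invertible B)
    (hDdiag : ∀ i j : Fin m, i ≠ j → D i j = 0)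
    (hLDU : B = L * D * U) (hC : C.IsSymm) :
    ∃ G : Matrix (Fin m) (Fin m) F,
      Matrix.fromBlocks 0 B Bᵀ C =
        Matrix.fromBlocks L 0 G Uᵀ * Matrix.fromBlocks 0 D D 0 *
          Matrix.fromBlocks Lᵀ Gᵀ 0 U := by
  have : Invertible (2 : F) := invertibleOfNonzero (Ring.two_ne_zero hchar)
  have hDU : IsUnit (D * U).det := by
    refine isUnit_det_of_mul_right (A := L) ?_
    rw [← Matrix.mul_assoc, ← hLDU]
    exact B.isUnit_det_of_invertible
  obtain ⟨X, hX⟩ := hC.exists_transpose_add_eq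
  refine ⟨X * (D * U)⁻¹, ?_⟩
  have hGDU : X * (D * U)⁻¹ * D * U = X := by
    rw [Matrix.mul_assoc _ D, nonsing_inv_mul_cancel_right _ _ hDU]
  rw [fromBlocks_mul_antidiag_mul_fromBlocks (IsDiag.isSymm hDdiag), hGDU, hX, hLDU]

/-- Off-diagonal pivoting factorization in characteristic ≠ 2. -/
theorem off_diagonal_pivoting (F : Type*) [Field F] (hchar : ringChar F ≠ 2)
    (m : ℕ) (B L D U C : Matrix (Fin m) (Fin m) F)
    (hB : Invertible B)
    (hLdiag : ∀ i, L i i = 1) (hLup : ∀ i j : Fin m, i < j → L i j = 0)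
    (hDdiag : ∀ i j : Fin m, i ≠ j → D i j = 0) (hDnz : ∀ i, D i i ≠ 0)
    (hUdiag : ∀ i, U i i = 1) (hUlow : ∀ i j : Fin m, j < i → U i j = 0)
    (hLDU : B = L * D * U) (hC : C.IsSymm) :
    ∃ G : Matrix (Fin m) (Fin m) F,
      Matrix.fromBlocks 0 B Bᵀ C =
        Matrix.fromBlocks L 0 G Uᵀ * Matrix.fromBlocks 0 D D 0 *
          Matrix.fromBlocks Lᵀ Gᵀ 0 U :=
  off_diagonal_pivoting_general F hchar m B L D U C hB hDdiag hLDU hC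
end

section
/- Let F be a field of characteristic 2, B an invertible m×m matrix over F with B = L D U (L unit lower triangular, D diagonal invertible, U unit upper triangular), and C a symmetric m×m matrix. Then there exist a matrix G and a diagonal matrix Δ such that [[0, B],[B^T, C]] = [[L, 0],[G, U^T]] · [[0, D],[D, Δ]] · [[L^T, G^T],[0, U]]. -/
/-!
Multiplying out the blocks, the only equation left is `G D U + (G D U)ᵀ + Uᵀ Δ U = C`.
The diagonal of `Uᵀ Δ U` is `(U ⊙ U)ᵀ` applied to the vector `Δ`; since `U` is unit upper
triangular, this matrix is unit lower triangular, so `Δ` can be chosen to make `C - Uᵀ Δ U`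
a symmetric matrix with zero diagonal. Such a matrix is `W + Wᵀ` for its strictly lower
triangular part `W`, and `G = W U⁻¹ D⁻¹` solves `G D U = W`.
-/

open Matrix

namespace Matrix

variable {n R : Type*}

theorem diag_transpose_mul_diagonal_mul [Fintype n] [DecidableEq n] [CommSemiring R]
    (U : Matrix n n R) (δ : n → R) :
    (Uᵀ * diagonal δ * U).diag = (U ⊙ U)ᵀ *ᵥ δ := by
  ext i
  rw [diag_apply, mul_apply]
  simp only [mulVec, dotProduct, transpose_apply, hadamard_apply, mul_diagonal]
  exact Finset.sum_congr rfl fun k _ => by ring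

theorem IsUpperTriangular.exists_diag_transpose_mul_diagonal_mul_eq [Fintype n] [LinearOrder n]
    [CommRing R] {U : Matrix n n R} (hU : U.IsUpperTriangular) (hU1 : ∀ i, U i i = 1)
    (c : n → R) : ∃ δ : n → R, (Uᵀ * diagonal δ * U).diag = c := by
  have hUU : (U ⊙ U).IsUpperTriangular := fun i j hij => by simp [hU hij]
  have hdet : IsUnit ((U ⊙ U)ᵀ).det := by
    simp [det_transpose, det_of_isUpperTriangular hUU, hU1]
  refine ⟨((U ⊙ U)ᵀ)⁻¹ *ᵥ c, ?_⟩
  rw [diag_transpose_mul_diagonal_mul, mulVec_mulVec, mul_nonsing_inv _ hdet, one_mulVec]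

theorem IsSymm.exists_add_transpose_eq [LinearOrder n] [AddCommMonoid R] {M : Matrix n n R}
    (hM : M.IsSymm) (h0 : M.diag = 0) : ∃ W : Matrix n n R, W + Wᵀ = M := by
  refine ⟨of fun i j => if j < i then M i j else 0, ?_⟩
  ext i j
  rcases lt_trichotomy i j with h | rfl | h
  · simp [h, not_lt.mpr h.le, hM.apply i j]
  · simpa using (congrFun h0 i).symm
  · simp [h, not_lt.mpr h.le]

theorem fromBlocks_mul_fromBlocks_mul_fromBlocks_transpose [Fintype n] [CommSemiring R]
    (L G U D Δ : Matrix n n R) (hD : D.IsSymm) :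
    fromBlocks L 0 G Uᵀ * fromBlocks 0 D D Δ * fromBlocks Lᵀ Gᵀ 0 U =
      fromBlocks 0 (L * D * U) (L * D * U)ᵀ (G * D * U + (G * D * U)ᵀ + Uᵀ * Δ * U) := by
  simp only [fromBlocks_multiply, transpose_mul, hD.eq, Matrix.mul_zero, Matrix.zero_mul,
    add_zero, zero_add, Matrix.add_mul, Matrix.mul_assoc]
  abel_nf

end Matrix

theorem off_diagonal_pivoting_char_two_general (F : Type*) [Field F]
    (m : ℕ) (B L D U C : Matrix (Fin m) (Fin m) F)
    (hDdiag : ∀ i j : Fin m, i ≠ j → D i j = 0) (hDnz : ∀ i, D i i ≠ 0)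
    (hUdiag : ∀ i, U i i = 1) (hUlow : ∀ i j : Fin m, j < i → U i j = 0)
    (hLDU : B = L * D * U) (hC : C.IsSymm) :
    ∃ (G Δ : Matrix (Fin m) (Fin m) F),
      (∀ i j : Fin m, i ≠ j → Δ i j = 0) ∧
      Matrix.fromBlocks 0 B Bᵀ C =
        Matrix.fromBlocks L 0 G Uᵀ * Matrix.fromBlocks 0 D D Δ *
          Matrix.fromBlocks Lᵀ Gᵀ 0 U := by
  have hDiag : D.IsDiag := hDdiag
  have hDdet : IsUnit D.det := by
    rw [← hDiag.diagonal_diag, det_diagonal]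
    exact (Finset.prod_ne_zero_iff.mpr fun i _ => hDnz i).isUnit
  have hUtri : U.IsUpperTriangular := fun i j h => hUlow i j h
  have hUdet : IsUnit U.det := by simp [det_of_isUpperTriangular hUtri, hUdiag]
  obtain ⟨δ, hδ⟩ := hUtri.exists_diag_transpose_mul_diagonal_mul_eq hUdiag C.diag
  have hUΔU : (Uᵀ * diagonal δ * U).IsSymm := by
    simp only [IsSymm, transpose_mul, transpose_transpose, diagonal_transpose, Matrix.mul_assoc]
  obtain ⟨W, hW⟩ := (hC.sub hUΔU).exists_add_transpose_eq
    (by rw [diag_sub, hδ, sub_self])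
  have hGDU : W * U⁻¹ * D⁻¹ * D * U = W := by
    rw [Matrix.mul_assoc (W * U⁻¹), nonsing_inv_mul _ hDdet, Matrix.mul_one, Matrix.mul_assoc,
      nonsing_inv_mul _ hUdet, Matrix.mul_one]
  refine ⟨W * U⁻¹ * D⁻¹, diagonal δ, fun i j => diagonal_apply_ne δ, ?_⟩
  rw [fromBlocks_mul_fromBlocks_mul_fromBlocks_transpose _ _ _ _ _ hDiag.isSymm, hGDU, hW,
    sub_add_cancel, hLDU]

/-- Off-diagonal pivoting factorization in characteristic 2, with an extra
diagonal `Δ` in the bottom-right block of the central matrix. -/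
theorem off_diagonal_pivoting_char_two (F : Type*) [Field F] [CharP F 2]
    (m : ℕ) (B L D U C : Matrix (Fin m) (Fin m) F)
    (hB : Invertible B)
    (hLdiag : ∀ i, L i i = 1) (hLup : ∀ i j : Fin m, i < j → L i j = 0)
    (hDdiag : ∀ i j : Fin m, i ≠ j → D i j = 0) (hDnz : ∀ i, D i i ≠ 0)
    (hUdiag : ∀ i, U i i = 1) (hUlow : ∀ i j : Fin m, j < i → U i j = 0)
    (hLDU : B = L * D * U) (hC : C.IsSymm) :
    ∃ (G Δ : Matrix (Fin m) (Fin m) F),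
      (∀ i j : Fin m, i ≠ j → Δ i j = 0) ∧
      Matrix.fromBlocks 0 B Bᵀ C =
        Matrix.fromBlocks L 0 G Uᵀ * Matrix.fromBlocks 0 D D Δ *
          Matrix.fromBlocks Lᵀ Gᵀ 0 U :=
  off_diagonal_pivoting_char_two_general F m B L D U C hDdiag hDnz hUdiag hUlow hLDU hC
end

section
/- Let F be a field of characteristic 2 and U a unit upper triangular n×n matrix over F. If C is a symmetric n×n matrix with zero diagonal, then there exists an upper triangular matrix X over F such that X^T U + U^T X = C. -/
/-!
Conjugating by `U⁻¹` reduces the equation to `Zᵀ + Z = C'` with `C' = U⁻ᵀ C U⁻¹` and `X = Z U`.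
In characteristic two `C'` is again symmetric with zero diagonal, so its strictly upper
triangular part `Z` solves it, and `X = Z U` is upper triangular because `U` is.
-/

open Matrix

namespace Matrix

variable {m n R : Type*}

def strictUpperPart [LinearOrder n] [Zero R] (A : Matrix n n R) : Matrix n n R :=
  of fun i j => if i < j then A i j else 0

theorem isUpperTriangular_strictUpperPart [LinearOrder n] [Zero R] (A : Matrix n n R) :
    (strictUpperPart A).IsUpperTriangular :=
  fun _ _ h => if_neg (not_lt_of_gt h)

theorem IsSymm.transpose_strictUpperPart_add_self [LinearOrder n] [AddZeroClass R]
    {A : Matrix n n R} (hA : A.IsSymm) (hdiag : ∀ i, A i i = 0) :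
    (strictUpperPart A)ᵀ + strictUpperPart A = A := by
  ext i j
  simp only [add_apply, transpose_apply, strictUpperPart, of_apply]
  rcases lt_trichotomy i j with h | rfl | h
  · simp [h, not_lt_of_gt h]
  · simp [hdiag]
  · simp [h, not_lt_of_gt h, hA.apply i j]

/-- Write `A = Bᵀ + B` with `B` strictly upper triangular, so that `Vᵀ * A * V = Mᵀ + M` with `M = Vᵀ * B * V`, whose diagonal is `2 * M i i`. -/
theorem IsSymm.transpose_mul_mul_apply_self_eq_zero [Fintype m] [LinearOrder m] [CommRing R]
    [CharP R 2] {A : Matrix m m R} (hA : A.IsSymm) (hdiag : ∀ i, A i i = 0)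
    (V : Matrix m n R) (i : n) : (Vᵀ * A * V) i i = 0 := by
  set M := Vᵀ * strictUpperPart A * V
  have hM : Vᵀ * A * V = Mᵀ + M := by
    rw [← hA.transpose_strictUpperPart_add_self hdiag]
    simp only [M, transpose_mul, transpose_transpose, Matrix.mul_add, Matrix.add_mul,
      Matrix.mul_assoc]
  rw [hM, add_apply, transpose_apply, CharTwo.add_self_eq_zero]

theorem exists_isUpperTriangular_transpose_mul_add_eq [Fintype n] [LinearOrder n] [CommRing R]
    [CharP R 2] {U C : Matrix n n R} (hU : U.IsUpperTriangular) (hUdet : IsUnit U.det)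
    (hC : C.IsSymm) (hCdiag : ∀ i, C i i = 0) :
    ∃ X : Matrix n n R, X.IsUpperTriangular ∧ Xᵀ * U + Uᵀ * X = C := by
  set C' := (U⁻¹)ᵀ * C * U⁻¹
  have hC' : C'.IsSymm := by
    simp only [IsSymm, C', transpose_mul, transpose_transpose, hC.eq, Matrix.mul_assoc]
  set Z := strictUpperPart C'
  have hZ : Zᵀ + Z = C' :=
    hC'.transpose_strictUpperPart_add_self (hC.transpose_mul_mul_apply_self_eq_zero hCdiag _)
  refine ⟨Z * U, (isUpperTriangular_strictUpperPart C').mul hU, ?_⟩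
  calc (Z * U)ᵀ * U + Uᵀ * (Z * U) = Uᵀ * (Zᵀ + Z) * U := by
        rw [transpose_mul]; noncomm_ring
    _ = C := by
        rw [hZ, ← Matrix.mul_assoc, ← Matrix.mul_assoc, ← transpose_mul, nonsing_inv_mul _ hUdet,
          transpose_one, Matrix.one_mul, Matrix.mul_assoc, nonsing_inv_mul _ hUdet, Matrix.mul_one]

end Matrix

/-- TRSSYR2K existence in characteristic 2 when the symmetric right-hand side
has zero diagonal and `U` is unit upper triangular. -/
theorem trssyr2k_exists_char_two (F : Type*) [Field F] [CharP F 2] (n : ℕ)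
    (U C : Matrix (Fin n) (Fin n) F)
    (hUlow : ∀ i j : Fin n, j < i → U i j = 0) (hUdiag : ∀ i, U i i = 1)
    (hC : C.IsSymm) (hCdiag : ∀ i, C i i = 0) :
    ∃ X : Matrix (Fin n) (Fin n) F,
      (∀ i j : Fin n, j < i → X i j = 0) ∧ Xᵀ * U + Uᵀ * X = C := by
  have hU : U.IsUpperTriangular := fun i j h => hUlow i j h
  have hUdet : U.det = 1 := by simp [det_of_isUpperTriangular hU, hUdiag]
  obtain ⟨X, hX, hXU⟩ :=
    exists_isUpperTriangular_transpose_mul_add_eq hU (hUdet ▸ isUnit_one) hC hCdiag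
  exact ⟨X, fun i j h => hX h, hXU⟩
end

section
/- Let P_i be the interleaving permutation matrix of order 2r and let L₁ be unit lower triangular, U₁ unit upper triangular, and G₁ lower triangular, all r×r. Then P_i^T · [[L₁, 0],[G₁, U₁^T]] · P_i is unit lower triangular. -/
open Matrix

namespace Matrix

variable {ι m n α : Type*}

theorem transpose_mul_mul_eq_submatrix [Fintype m] [DecidableEq m] [NonAssocSemiring α]
    (f : n → m) (P : Matrix m n α) (hP : ∀ j k, P j k = if j = f k then 1 else 0)
    (M : Matrix m m α) : Pᵀ * M * P = M.submatrix f f := by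
  ext p q
  simp [mul_apply, hP, Finset.sum_ite_eq']

/-- The column map of the interleaving permutation `P_i`: its column `(i, 0)` is `e_i` and its
column `(i, 1)` is `e_{r+i}`, so the lexicographic order on `ι × Fin 2` is the interleaved order. -/
def interleave (p : ι × Fin 2) : ι ⊕ ι :=
  if p.2 = 0 then Sum.inl p.1 else Sum.inr p.1

@[simp]
theorem interleave_zero (i : ι) : interleave (i, 0) = Sum.inl i := rfl

@[simp]
theorem interleave_one (i : ι) : interleave (i, 1) = Sum.inr i := rfl

theorem fromBlocks_zero₁₂_interleave_eq_zero [LT ι] [Zero α] {A C D : Matrix ι ι α}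
    (hA : ∀ i j, i < j → A i j = 0) (hC : ∀ i j, i < j → C i j = 0)
    (hD : ∀ i j, i < j → D i j = 0) {p q : ι × Fin 2}
    (hpq : p.1 < q.1 ∨ (p.1 = q.1 ∧ p.2 < q.2)) :
    fromBlocks A 0 C D (interleave p) (interleave q) = 0 := by
  obtain ⟨i, s⟩ := p
  obtain ⟨j, t⟩ := q
  fin_cases s <;> fin_cases t <;> simp_all

end Matrix

/-- Conjugating `[[L₁,0],[G₁,U₁ᵀ]]` by the interleaving permutation yields a unit
lower triangular matrix (w.r.t. the interleaved, i.e. lexicographic, order),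
provided `G₁` is lower triangular. -/
theorem interleaving_unit_lower_triangular (F : Type*) [Field F] (r : ℕ)
    (L₁ G₁ U₁ : Matrix (Fin r) (Fin r) F)
    (hLdiag : ∀ i, L₁ i i = 1) (hLup : ∀ i j : Fin r, i < j → L₁ i j = 0)
    (hUdiag : ∀ i, U₁ i i = 1) (hUlow : ∀ i j : Fin r, j < i → U₁ i j = 0)
    (hG : ∀ i j : Fin r, i < j → G₁ i j = 0)
    (P : Matrix (Fin r ⊕ Fin r) (Fin r × Fin 2) F)
    (hP : ∀ j k, P j k =
      if j = (if k.2 = 0 then Sum.inl k.1 else Sum.inr k.1) then 1 else 0) :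
    (∀ p : Fin r × Fin 2,
      (Pᵀ * Matrix.fromBlocks L₁ 0 G₁ U₁ᵀ * P) p p = 1) ∧
    (∀ p q : Fin r × Fin 2, (p.1 < q.1 ∨ (p.1 = q.1 ∧ p.2 < q.2)) →
      (Pᵀ * Matrix.fromBlocks L₁ 0 G₁ U₁ᵀ * P) p q = 0) := by
  rw [transpose_mul_mul_eq_submatrix interleave P hP]
  refine ⟨?_, fun p q hpq ↦
    fromBlocks_zero₁₂_interleave_eq_zero hLup hG (fun i j hij ↦ hUlow j i hij) hpq⟩
  rintro ⟨i, s⟩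
  fin_cases s <;> simp [hLdiag, hUdiag]
end

section
/- Every symmetric matrix A over a field of characteristic different from 2 admits a factorization A = P L D L^T P^T, where P is a permutation matrix, L is unit lower triangular, and D is block diagonal with blocks either 1×1 scalars or 2×2 antidiagonal blocks of the form [[0,x],[x,0]]. -/
/-!
Symmetric pivoting. If some diagonal entry of `A` is nonzero, move it to the top-left corner
and eliminate with it as a 1×1 pivot. If the diagonal vanishes but `A i j ≠ 0`, the principal
block on `{i, j}` is `!![0, x; x, 0]` with `x ≠ 0`, an invertible 2×2 pivot. With the pivot `B`
in the corner, in block form `A = [1 0; C B⁻¹ 1] [B 0; 0 S] [1 0; C B⁻¹ 1]ᵀ` where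
`S = E - C B⁻¹ Cᵀ` is again symmetric, so one recurses on `S`; the row permutation of the
factorization of `S` is absorbed into the permutation of `A`.
-/

open Matrix

section

variable {R : Type*} {k m n : ℕ}

def IsUnitLowerTriangular [Zero R] [One R] (L : Matrix (Fin n) (Fin n) R) : Prop :=
  (∀ i, L i i = 1) ∧ ∀ i j : Fin n, i < j → L i j = 0

theorem isUnitLowerTriangular_one [Zero R] [One R] :
    IsUnitLowerTriangular (1 : Matrix (Fin n) (Fin n) R) :=
  ⟨fun i => one_apply_eq i, fun _ _ h => one_apply_ne h.ne⟩

/-- Entrywise form of "block diagonal with blocks `!![d]` and `!![0, x; x, 0]`". -/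
def IsPivotBlockDiagonal [Zero R] (D : Matrix (Fin n) (Fin n) R) : Prop :=
  D.IsSymm ∧
    (∀ i j : Fin n, D i j ≠ 0 → i.val = j.val ∨ i.val + 1 = j.val ∨ j.val + 1 = i.val) ∧
    ∀ i j : Fin n, i.val + 1 = j.val → D i j ≠ 0 →
      D i i = 0 ∧ D j j = 0 ∧ (∀ k : Fin n, j.val + 1 = k.val → D j k = 0) ∧
        ∀ k : Fin n, k.val + 1 = i.val → D k i = 0

theorem IsUnitLowerTriangular.reindex_fromBlocks [Zero R] [One R]
    {L₁ : Matrix (Fin k) (Fin k) R} {L₂ : Matrix (Fin m) (Fin m) R}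
    (h₁ : IsUnitLowerTriangular L₁) (h₂ : IsUnitLowerTriangular L₂)
    (X : Matrix (Fin m) (Fin k) R) :
    IsUnitLowerTriangular (reindex finSumFinEquiv finSumFinEquiv (fromBlocks L₁ 0 X L₂)) := by
  constructor
  · intro i
    induction i using Fin.addCases <;> simp [h₁.1, h₂.1]
  · intro i j hij
    rw [Fin.lt_def] at hij
    induction i using Fin.addCases <;> induction j using Fin.addCases <;>
      simp_all [h₁.2, h₂.2]
    omega

theorem IsPivotBlockDiagonal.reindex_fromBlocks [Zero R]
    {D₁ : Matrix (Fin k) (Fin k) R} {D₂ : Matrix (Fin m) (Fin m) R}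
    (h₁ : IsPivotBlockDiagonal D₁) (h₂ : IsPivotBlockDiagonal D₂) :
    IsPivotBlockDiagonal (reindex finSumFinEquiv finSumFinEquiv (fromBlocks D₁ 0 0 D₂)) := by
  obtain ⟨s₁, t₁, b₁⟩ := h₁
  obtain ⟨s₂, t₂, b₂⟩ := h₂
  refine ⟨?_, ?_, ?_⟩
  · simp [IsSymm, fromBlocks_transpose, s₁.eq, s₂.eq]
  · intro i j hij
    induction i using Fin.addCases <;> induction j using Fin.addCases <;> simp_all
    · have := t₂ _ _ hij; omega
  · intro i j hij hne
    induction i using Fin.addCases <;> induction j using Fin.addCases <;> simp_all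
    · obtain ⟨c₁, c₂, c₃, c₄⟩ := b₁ _ _ hij hne
      refine ⟨c₁, c₂, fun c hc => ?_, fun c hc => ?_⟩ <;> induction c using Fin.addCases <;>
        simp_all
    · obtain ⟨c₁, c₂, c₃, c₄⟩ := b₂ _ _ (by omega) hne
      refine ⟨c₁, c₂, fun c hc => ?_, fun c hc => ?_⟩ <;> induction c using Fin.addCases <;>
        simp_all [add_assoc]

theorem isPivotBlockDiagonal_of_fin_one [Zero R] (D : Matrix (Fin 1) (Fin 1) R) :
    IsPivotBlockDiagonal D := by
  refine ⟨?_, ?_, ?_⟩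
  · ext i j; simp [Subsingleton.elim i j]
  · intro i j _; simp [Subsingleton.elim i j]
  · intro i j hij; omega

theorem isPivotBlockDiagonal_antidiagonal [Zero R] (x : R) :
    IsPivotBlockDiagonal !![0, x; x, 0] := by
  refine ⟨?_, ?_, ?_⟩
  · ext i j; fin_cases i <;> fin_cases j <;> rfl
  · intro i j _; omega
  · intro i j hij _
    fin_cases i <;> fin_cases j <;> simp at hij
    refine ⟨rfl, rfl, fun k hk => ?_, fun k hk => ?_⟩ <;> fin_cases k <;> simp at hk

theorem fromBlocks_eq_ldlt [CommRing R] {ι κ : Type*} [Fintype ι] [DecidableEq ι] [Fintype κ]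
    [DecidableEq κ] {B : Matrix ι ι R} (hB : B.IsSymm) (hdet : IsUnit B.det)
    (C : Matrix κ ι R) (K D : Matrix κ κ R) :
    fromBlocks B Cᵀ C (C * B⁻¹ * Cᵀ + K * D * Kᵀ) =
      fromBlocks 1 0 (C * B⁻¹) K * fromBlocks B 0 0 D * (fromBlocks 1 0 (C * B⁻¹) K)ᵀ := by
  simp [fromBlocks_transpose, fromBlocks_multiply, transpose_nonsing_inv, hB.eq,
    Matrix.mul_assoc, nonsing_inv_mul _ hdet, mul_nonsing_inv_cancel_left _ _ hdet]

theorem submatrix_id_mul_mul_transpose [NonUnitalNonAssocSemiring R] {ι κ ν : Type*}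
    [Fintype κ] [Fintype ν] (M : Matrix κ ν R) (D : Matrix ν ν R) (f : ι → κ) :
    M.submatrix f id * D * (M.submatrix f id)ᵀ = (M * D * Mᵀ).submatrix f f := by
  ext i j
  simp [mul_apply]

/-- `L.submatrix σ id` is `P * L` for the permutation matrix `P` of `σ`. -/
def HasPLDLTFactorization [CommRing R] (A : Matrix (Fin n) (Fin n) R) : Prop :=
  ∃ (σ : Equiv.Perm (Fin n)) (L D : Matrix (Fin n) (Fin n) R),
    IsUnitLowerTriangular L ∧ IsPivotBlockDiagonal D ∧
      A = L.submatrix σ id * D * (L.submatrix σ id)ᵀ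

namespace HasPLDLTFactorization

variable [CommRing R]

theorem zero : HasPLDLTFactorization (0 : Matrix (Fin n) (Fin n) R) :=
  ⟨1, 1, 0, isUnitLowerTriangular_one, ⟨isSymm_zero, by simp, by simp⟩, by simp⟩

theorem of_submatrix {A : Matrix (Fin n) (Fin n) R} (τ : Equiv.Perm (Fin n))
    (h : HasPLDLTFactorization (A.submatrix τ τ)) : HasPLDLTFactorization A := by
  obtain ⟨σ, L, D, hL, hD, hA⟩ := h
  refine ⟨τ.symm.trans σ, L, D, hL, hD, ?_⟩
  have := congr_arg (submatrix · τ.symm τ.symm) hA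
  simpa [transpose_submatrix, ← submatrix_mul_equiv _ _ _ (Equiv.refl _)] using this

theorem reindex_fromBlocks {B : Matrix (Fin k) (Fin k) R} (hB : IsPivotBlockDiagonal B)
    (hdet : IsUnit B.det) (C : Matrix (Fin m) (Fin k) R) {E : Matrix (Fin m) (Fin m) R}
    (hS : HasPLDLTFactorization (E - C * B⁻¹ * Cᵀ)) :
    HasPLDLTFactorization (reindex finSumFinEquiv finSumFinEquiv (fromBlocks B Cᵀ C E)) := by
  obtain ⟨σ, L, D, hL, hD, hS⟩ := hS
  set e : Fin k ⊕ Fin m ≃ Fin (k + m) := finSumFinEquiv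
  set ρ : Equiv.Perm (Fin k ⊕ Fin m) := Equiv.sumCongr 1 σ
  set L' := fromBlocks (1 : Matrix (Fin k) (Fin k) R) 0 ((C * B⁻¹).submatrix σ.symm id) L
  have hL' : fromBlocks 1 0 (C * B⁻¹) (L.submatrix σ id) = L'.submatrix ρ id := by
    ext (i | i) (j | j) <;> simp [L', ρ]
  refine ⟨e.permCongr ρ, reindex e e L', reindex e e (fromBlocks B 0 0 D),
    ?_, hB.reindex_fromBlocks hD, ?_⟩
  · exact isUnitLowerTriangular_one.reindex_fromBlocks hL _
  · rw [sub_eq_iff_eq_add'] at hS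
    rw [hS, fromBlocks_eq_ldlt hB.1 hdet, hL', submatrix_id_mul_mul_transpose,
      submatrix_id_mul_mul_transpose]
    ext i j
    simp [e, ρ, reindex_apply, transpose_submatrix]

theorem of_pivot {A : Matrix (Fin (k + m)) (Fin (k + m)) R} (hA : A.IsSymm)
    {f : Fin k → Fin (k + m)} (hf : Function.Injective f)
    (hB : IsPivotBlockDiagonal (A.submatrix f f)) (hdet : IsUnit (A.submatrix f f).det)
    (ih : ∀ S : Matrix (Fin m) (Fin m) R, S.IsSymm → HasPLDLTFactorization S) :
    HasPLDLTFactorization A := by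
  obtain ⟨τ, hτ⟩ :=
    Equiv.Perm.exists_extending_pair (Fin.castAdd m) f (Fin.castAdd_injective k m) hf
  apply of_submatrix τ
  set B := A.submatrix f f
  set C := A.submatrix (τ ∘ Fin.natAdd k) f
  set E := A.submatrix (τ ∘ Fin.natAdd k) (τ ∘ Fin.natAdd k)
  have hblocks :
      A.submatrix τ τ = reindex finSumFinEquiv finSumFinEquiv (fromBlocks B Cᵀ C E) := by
    ext i j
    induction i using Fin.addCases <;> induction j using Fin.addCases <;>
      simp [B, C, E, hτ, hA.apply]
  have hSymm : (E - C * B⁻¹ * Cᵀ).IsSymm := by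
    simp [IsSymm, Matrix.mul_assoc, transpose_nonsing_inv, hB.1.eq, E, (hA.submatrix _).eq]
  rw [hblocks]
  exact reindex_fromBlocks hB hdet C (ih _ hSymm)

end HasPLDLTFactorization

theorem hasPLDLTFactorization {F : Type*} [Field F] :
    ∀ {n : ℕ} (A : Matrix (Fin n) (Fin n) F), A.IsSymm → HasPLDLTFactorization A := by
  intro n
  induction n using Nat.strong_induction_on with
  | _ n ih =>
  intro A hA
  by_cases hdiag : ∃ i, A i i ≠ 0
  · obtain ⟨i, hi⟩ := hdiag
    obtain ⟨m, rfl⟩ : ∃ m, n = 1 + m := ⟨n - 1, by have := i.pos; omega⟩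
    refine .of_pivot hA (f := ![i]) (Function.injective_of_subsingleton _)
      (isPivotBlockDiagonal_of_fin_one _) ?_ (ih m (by omega))
    rw [det_fin_one, isUnit_iff_ne_zero]
    simpa using hi
  push Not at hdiag
  by_cases hoff : ∃ i j, A i j ≠ 0
  · obtain ⟨i, j, hij⟩ := hoff
    have hne : i ≠ j := by rintro rfl; exact hij (hdiag i)
    obtain ⟨m, rfl⟩ : ∃ m, n = 2 + m :=
      ⟨n - 2, by have := Fin.val_ne_of_ne hne; have := i.isLt; have := j.isLt; omega⟩
    have hblock : A.submatrix ![i, j] ![i, j] = !![0, A i j; A i j, 0] := by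
      ext a b; fin_cases a <;> fin_cases b <;> simp [hdiag, hA.apply]
    refine .of_pivot hA (f := ![i, j]) ?_ (hblock ▸ isPivotBlockDiagonal_antidiagonal _) ?_
      (ih m (by omega))
    · intro a b h; fin_cases a <;> fin_cases b <;> simp_all [eq_comm]
    · simpa [hblock, det_fin_two_of] using hij
  push Not at hoff
  exact (show A = 0 from ext hoff) ▸ .zero

end

theorem exists_pldltpt_general (F : Type*) [Field F] (n : ℕ)
    (A : Matrix (Fin n) (Fin n) F) (hA : A.IsSymm) :
    ∃ (σ : Equiv.Perm (Fin n)) (L D : Matrix (Fin n) (Fin n) F),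
      (∀ i, L i i = 1) ∧ (∀ i j : Fin n, i < j → L i j = 0) ∧
      D.IsSymm ∧
      -- D is tridiagonal:
      (∀ i j : Fin n, D i j ≠ 0 →
        i.val = j.val ∨ i.val + 1 = j.val ∨ j.val + 1 = i.val) ∧
      -- every nonzero superdiagonal entry belongs to an antidiagonal 2×2 block:
      (∀ i j : Fin n, i.val + 1 = j.val → D i j ≠ 0 →
        D i i = 0 ∧ D j j = 0 ∧
        (∀ k : Fin n, j.val + 1 = k.val → D j k = 0) ∧
        (∀ k : Fin n, k.val + 1 = i.val → D k i = 0)) ∧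
      A = (σ.toPEquiv.toMatrix : Matrix (Fin n) (Fin n) F) * L * D * Lᵀ *
        (σ.toPEquiv.toMatrix : Matrix (Fin n) (Fin n) F)ᵀ := by
  obtain ⟨σ, L, D, ⟨hdiag, hupper⟩, ⟨hsymm, htri, hblock⟩, rfl⟩ :=
    hasPLDLTFactorization A hA
  refine ⟨σ, L, D, hdiag, hupper, hsymm, htri, hblock, ?_⟩
  rw [Matrix.mul_assoc _ Lᵀ, ← transpose_mul, PEquiv.toMatrix_toPEquiv_mul]

/-- Every symmetric matrix over a field of characteristic ≠ 2 admits a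
`P L D Lᵀ Pᵀ` factorization with `P` a permutation matrix, `L` unit lower
triangular and `D` block diagonal with 1×1 blocks or 2×2 antidiagonal blocks. -/
theorem exists_pldltpt (F : Type*) [Field F] (hchar : ringChar F ≠ 2) (n : ℕ)
    (A : Matrix (Fin n) (Fin n) F) (hA : A.IsSymm) :
    ∃ (σ : Equiv.Perm (Fin n)) (L D : Matrix (Fin n) (Fin n) F),
      (∀ i, L i i = 1) ∧ (∀ i j : Fin n, i < j → L i j = 0) ∧
      D.IsSymm ∧
      -- D is tridiagonal:
      (∀ i j : Fin n, D i j ≠ 0 →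
        i.val = j.val ∨ i.val + 1 = j.val ∨ j.val + 1 = i.val) ∧
      -- every nonzero superdiagonal entry belongs to an antidiagonal 2×2 block:
      (∀ i j : Fin n, i.val + 1 = j.val → D i j ≠ 0 →
        D i i = 0 ∧ D j j = 0 ∧
        (∀ k : Fin n, j.val + 1 = k.val → D j k = 0) ∧
        (∀ k : Fin n, k.val + 1 = i.val → D k i = 0)) ∧
      A = (σ.toPEquiv.toMatrix : Matrix (Fin n) (Fin n) F) * L * D * Lᵀ *
        (σ.toPEquiv.toMatrix : Matrix (Fin n) (Fin n) F)ᵀ :=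
  exists_pldltpt_general F n A hA
end
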